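/- arXiv:2006.08074 — 2 statements merged into one kernel-verified Lean document; each statement's English description precedes it below -/
import Mathlib

section
/- Let R be a ring, n a positive integer, and a,b,c,d ∈ R satisfy (ac)² = (db)(ac), (db)² = (ac)(db), b(ac)a = b(db)a, and c(ac)d = c(db)d. Then (1-bd)^n has a generalized Drazin inverse if and only if (1-ac)^n has a generalized Drazin inverse. -/
/-- An element is quasinilpotent if `1 + a*x` is a unit for every `x` commuting with `a`. -/
def Quasinilpotent {R : Type*} [Ring R] (a : R) : Prop :=
  ∀ x : R, x * a = a * x → IsUnit (1 + a * x)

/-- `x` is a generalized Drazin inverse of `a`. -/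
def IsGDrazin {R : Type*} [Ring R] (a x : R) : Prop :=
  x = x * a * x ∧ (∀ y : R, y * a = a * y → x * y = y * x) ∧
    Quasinilpotent (a - a ^ 2 * x)

/-!
By Koliha's characterization, `a` has a generalized Drazin inverse iff it has a spectral
idempotent `p`: one commuting with the commutant of `a`, with `a * p` quasinilpotent and
`a + p` a unit. Suppose `n * s = σ * n`, `m * σ = s * m`, `m * n = s ^ k` and `n * m = σ ^ k`.
If `p` is a spectral idempotent of `1 - s` and `g` inverts `s ^ k` on the range of `p`, then
`n * g * m` is a spectral idempotent of `1 - σ`. With `k = 1`, `n = b`, `m = a` this is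
Jacobson's lemma for `1 - a * b` and `1 - b * a`; with `k = 3`, `s = c * a`, `σ = b * d`,
`n = b * a`, `m = c * d * (b * d)` the four hypotheses give the case `n = 1` of the theorem.

For general `n`, `(1 - a * c) ^ n = 1 - S * a * c` and `(1 - b * d) ^ n = 1 - b * (T * d)` with
`S`, `T` the geometric sums of `1 - a * c` and `1 - d * b`. Since `w = a * c - d * b` satisfies
`w * (a * c) = w * (d * b) = 0`, the quadruple `(S * a, b, c, T * d)` satisfies the hypotheses
again.
-/

open Finset

section

variable {R : Type*} [Ring R]

theorem pow_mul_eq_self_of_mul_eq_self {x y : R} (h : y * x = x) (n : ℕ) : y ^ n * x = x := by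
  induction n with
  | zero => rw [pow_zero, one_mul]
  | succ n ih => rw [pow_succ, mul_assoc, h, ih]

theorem mul_pow_eq_self_of_mul_eq_self {x y : R} (h : x * y = x) (n : ℕ) : x * y ^ n = x := by
  induction n with
  | zero => rw [pow_zero, mul_one]
  | succ n ih => rw [pow_succ, ← mul_assoc, ih, h]

theorem mul_geom_sum_eq_nsmul {x y : R} (h : x * y = x) (n : ℕ) :
    x * ∑ i ∈ range n, y ^ i = n • x := by
  rw [mul_sum, sum_congr rfl fun i _ => mul_pow_eq_self_of_mul_eq_self h i, sum_const, card_range]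

theorem SemiconjBy.geom_sum {x y z : R} (h : SemiconjBy z x y) (n : ℕ) :
    SemiconjBy z (∑ i ∈ range n, x ^ i) (∑ i ∈ range n, y ^ i) := by
  simp only [SemiconjBy, mul_sum, sum_mul]
  exact sum_congr rfl fun i _ => (h.pow_right i).eq

theorem semiconjBy_one_sub_mul (a b : R) : SemiconjBy a (1 - b * a) (1 - a * b) :=
  (SemiconjBy.one_right a).sub_right (mul_assoc a b a).symm

theorem pow_sub_pow_eq_geom_sum_mul {x y : R} (h : (y - x) * y = y - x) (n : ℕ) :
    y ^ n - x ^ n = (∑ i ∈ range n, x ^ i) * (y - x) := by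
  induction n with
  | zero => simp
  | succ n ih =>
    calc y ^ (n + 1) - x ^ (n + 1) = (y ^ n - x ^ n) * y + x ^ n * (y - x) := by
          rw [pow_succ, pow_succ]; noncomm_ring
      _ = (∑ i ∈ range (n + 1), x ^ i) * (y - x) := by
          rw [ih, mul_assoc, h, sum_range_succ, add_mul]

theorem geom_sum_mul_sub_comm {x y : R} (h : (y - x) * y = y - x) (hsq : (y - x) * (y - x) = 0)
    (n : ℕ) : (∑ i ∈ range n, x ^ i) * (y - x) = (∑ i ∈ range n, y ^ i) * (y - x) := by
  rw [sum_mul, sum_mul]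
  refine sum_congr rfl fun i _ => (sub_eq_zero.mp ?_).symm
  rw [← sub_mul, pow_sub_pow_eq_geom_sum_mul h, mul_assoc, hsq, mul_zero]

theorem geom_sum_one_sub_mul (x : R) (n : ℕ) :
    (∑ i ∈ range n, (1 - x) ^ i) * x = 1 - (1 - x) ^ n := by
  rw [← geom_sum_mul_neg, sub_sub_cancel]

theorem isUnit_one_add_mul_swap {a b : R} (h : IsUnit (1 + a * b)) : IsUnit (1 + b * a) := by
  obtain ⟨r, hr, hr'⟩ := isUnit_iff_exists.mp h
  refine isUnit_iff_exists.mpr ⟨1 - b * r * a, ?_, ?_⟩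
  · calc (1 + b * a) * (1 - b * r * a) = 1 + b * a - b * ((1 + a * b) * r) * a := by noncomm_ring
      _ = 1 := by rw [hr]; noncomm_ring
  · calc (1 - b * r * a) * (1 + b * a) = 1 + b * a - b * (r * (1 + a * b)) * a := by noncomm_ring
      _ = 1 := by rw [hr']; noncomm_ring

namespace Quasinilpotent

theorem isUnit_one_add {e : R} (h : Quasinilpotent e) : IsUnit (1 + e) := by
  simpa using h 1 (Commute.one_left e)

theorem isUnit_one_sub {e : R} (h : Quasinilpotent e) : IsUnit (1 - e) := by
  simpa [sub_eq_add_neg] using h (-1) (Commute.one_left e).neg_left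

theorem of_isUnit_one_add_sq_mul {a : R} (h : ∀ t, Commute t a → IsUnit (1 + a ^ 2 * t)) :
    Quasinilpotent a := by
  intro t ht
  replace ht : Commute t a := ht
  have hfac : (1 + a * t) * (1 - a * t) = 1 + a ^ 2 * -(t * t) := by
    calc (1 + a * t) * (1 - a * t) = 1 - a * (t * a) * t := by noncomm_ring
      _ = 1 + a ^ 2 * -(t * t) := by rw [ht.eq]; noncomm_ring
  have hc : Commute (1 + a * t) (1 - a * t) := by
    simp only [Commute, SemiconjBy]; noncomm_ring
  have hu : IsUnit ((1 + a * t) * (1 - a * t)) := hfac ▸ h _ (ht.mul_left ht).neg_left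
  exact (hc.isUnit_mul_iff.mp hu).1

theorem mul_comm {x y : R} (h : Quasinilpotent (x * y)) : Quasinilpotent (y * x) := by
  refine of_isUnit_one_add_sq_mul fun t ht => ?_
  have hc : Commute (x * t * y) (x * y) := by
    calc x * t * y * (x * y) = x * (t * (y * x)) * y := by noncomm_ring
      _ = x * (y * x * t) * y := by rw [ht.eq]
      _ = x * y * (x * t * y) := by noncomm_ring
  have hu : IsUnit (1 + x * (y * x * t * y)) := by
    simpa only [mul_assoc] using h _ hc
  have hsq : (1 : R) + (y * x) ^ 2 * t = 1 + y * x * t * y * x := by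
    calc (1 : R) + (y * x) ^ 2 * t = 1 + y * x * ((y * x) * t) := by noncomm_ring
      _ = 1 + y * x * (t * (y * x)) := by rw [ht.eq]
      _ = 1 + y * x * t * y * x := by noncomm_ring
  rw [hsq]
  simpa only [mul_assoc] using isUnit_one_add_mul_swap hu

end Quasinilpotent

structure IsSpectralIdempotent (a p : R) : Prop where
  isIdempotentElem : IsIdempotentElem p
  commute : ∀ t, Commute t a → Commute t p
  quasinilpotent : Quasinilpotent (a * p)
  isUnit : IsUnit (a + p)

theorem IsSpectralIdempotent.isGDrazin {a p : R} (h : IsSpectralIdempotent a p) :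
    IsGDrazin a (↑h.isUnit.unit⁻¹ * (1 - p)) := by
  set v : R := ↑h.isUnit.unit⁻¹
  have hv : ∀ t, Commute t a → Commute t v := fun t ht =>
    (ht.add_right (h.commute t ht)).units_inv_right
  have hax : a * (v * (1 - p)) = 1 - p := by
    calc a * (v * (1 - p)) = v * ((a + p) * (1 - p)) := by
          rw [← mul_assoc, (hv a (.refl a)).eq, add_mul, h.isIdempotentElem.mul_one_sub_self,
            add_zero, mul_assoc]
      _ = 1 - p := by rw [← mul_assoc, h.isUnit.val_inv_mul, one_mul]
  refine ⟨?_, fun t ht => ((hv t ht).mul_right ((Commute.one_right t).sub_right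
    (h.commute t ht))).symm, ?_⟩
  · rw [mul_assoc, hax, mul_assoc, h.isIdempotentElem.one_sub.eq]
  · have hap : a - a ^ 2 * (v * (1 - p)) = a * p := by
      rw [sq, mul_assoc, hax]; noncomm_ring
    exact hap ▸ h.quasinilpotent

theorem IsGDrazin.isSpectralIdempotent {a y : R} (h : IsGDrazin a y) :
    IsSpectralIdempotent a (1 - a * y) := by
  obtain ⟨hyay, hcomm, hqn⟩ := h
  set p := 1 - a * y
  have hya : Commute y a := hcomm a rfl
  have hp : ∀ t, Commute t a → Commute t p := fun t ht =>
    (Commute.one_right t).sub_right (ht.mul_right (hcomm t ht).symm)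
  have hidem : IsIdempotentElem (a * y) := by
    rw [IsIdempotentElem, mul_assoc, ← mul_assoc y, ← hyay]
  have hqn' : Quasinilpotent (a * p) := by
    rwa [show a * p = a - a ^ 2 * y by simp only [p]; noncomm_ring]
  refine ⟨hidem.one_sub, hp, hqn', ?_⟩
  have hpy : p * y = 0 := by
    rw [sub_mul, one_mul, ← hya.eq, ← hyay, sub_self]
  have hprod : (a + p) * (y + p) = 1 + a * p := by
    rw [add_mul, mul_add, mul_add, hpy, hidem.one_sub.eq]; simp only [p]; noncomm_ring
  have hc : Commute (a + p) (y + p) :=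
    ((hya.symm.add_right (hp a (.refl a))).add_left
      ((hp y hya).symm.add_right (.refl p)))
  exact (hc.isUnit_mul_iff.mp (hprod ▸ hqn'.isUnit_one_add)).1

structure IsCornerPowInv (s : R) (k : ℕ) (p g : R) : Prop where
  commute : ∀ t, Commute t s → Commute t g
  pow_mul : s ^ k * g = p
  mul_idem : g * p = g

theorem IsSpectralIdempotent.exists_isCornerPowInv {s p : R}
    (hp : IsSpectralIdempotent (1 - s) p) (k : ℕ) : ∃ g, IsCornerPowInv s k p g := by
  have hu := hp.quasinilpotent.isUnit_one_sub
  set κ : R := ↑hu.unit⁻¹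
  have hps : ∀ t, Commute t s → Commute t p := fun t ht =>
    hp.commute t ((Commute.one_right t).sub_right ht)
  have hκ : ∀ t, Commute t s → Commute t κ := fun t ht =>
    ((Commute.one_right t).sub_right
      (((Commute.one_right t).sub_right ht).mul_right (hps t ht))).units_inv_right
  -- `s` acts on the range of `p` as the unit `1 - (1 - s) * p`
  have hsκp : s * κ * p = p := by
    calc s * κ * p = κ * ((1 - (1 - s) * p) * p) := by
          rw [(hκ s (.refl s)).eq, mul_assoc, sub_mul, one_mul, mul_assoc, hp.isIdempotentElem.eq]
          noncomm_ring
      _ = p := by rw [← mul_assoc, hu.val_inv_mul, one_mul]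
  refine ⟨κ ^ k * p, fun t ht => ((hκ t ht).pow_right k).mul_right (hps t ht), ?_, ?_⟩
  · rw [← mul_assoc, ← (hκ s (.refl s)).mul_pow, pow_mul_eq_self_of_mul_eq_self hsκp]
  · rw [mul_assoc, hp.isIdempotentElem.eq]

namespace IsCornerPowInv

variable {s σ n m p g : R} {k : ℕ}

theorem mul_pow (h : IsCornerPowInv s k p g) : g * s ^ k = p :=
  (h.commute _ ((Commute.refl s).pow_left k)).eq ▸ h.pow_mul

theorem idem_mul (h : IsCornerPowInv s k p g) : p * g = g := by
  have hps : Commute p s :=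
    h.pow_mul ▸ ((Commute.refl s).pow_left k).mul_left (h.commute s (.refl s)).symm
  rw [(h.commute p hps).eq, h.mul_idem]

theorem isIdempotentElem_conj (hg : IsCornerPowInv s k p g) (hmn : m * n = s ^ k) :
    IsIdempotentElem (n * g * m) := by
  calc n * g * m * (n * g * m) = n * (g * (m * n) * g) * m := by noncomm_ring
    _ = n * g * m := by rw [hmn, hg.mul_pow, hg.idem_mul]

theorem commute_conj (hg : IsCornerPowInv s k p g) (hn : SemiconjBy n s σ)
    (hm : SemiconjBy m σ s) (hnm : n * m = σ ^ k) (t : R) (ht : Commute t (1 - σ)) :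
    Commute t (n * g * m) := by
  have htσ : Commute t σ := by simpa using (Commute.one_right t).sub_right ht
  have hτ : Commute (m * t * n) s := by
    calc m * t * n * s = m * (t * σ) * n := by rw [mul_assoc, hn.eq]; noncomm_ring
      _ = m * σ * t * n := by rw [htσ.eq]; noncomm_ring
      _ = s * (m * t * n) := by rw [hm.eq]; noncomm_ring
  have hgτ : g * (m * t * n) = m * t * n * g := (hg.commute _ hτ).eq.symm
  have hleft : n * g * m * t * (n * g * m) = n * g * m * t := by
    calc n * g * m * t * (n * g * m) = n * g * (m * t * n * g) * m := by noncomm_ring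
      _ = n * g * g * m * (t * (n * m)) := by rw [← hgτ]; noncomm_ring
      _ = n * g * g * (m * σ ^ k) * t := by rw [hnm, (htσ.pow_right k).eq]; noncomm_ring
      _ = n * (g * (g * s ^ k)) * m * t := by rw [(hm.pow_right k).eq]; noncomm_ring
      _ = n * g * m * t := by rw [hg.mul_pow, hg.mul_idem]
  have hright : n * g * m * t * (n * g * m) = t * (n * g * m) := by
    calc n * g * m * t * (n * g * m) = n * (g * (m * t * n)) * g * m := by noncomm_ring
      _ = n * m * t * n * (g * g) * m := by rw [hgτ]; noncomm_ring
      _ = t * (σ ^ k * n) * (g * g) * m := by rw [hnm, ← (htσ.pow_right k).eq]; noncomm_ring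
      _ = t * (n * (s ^ k * g * g) * m) := by rw [← (hn.pow_right k).eq]; noncomm_ring
      _ = t * (n * g * m) := by rw [hg.pow_mul, hg.idem_mul]
  exact hright.symm.trans hleft

theorem quasinilpotent_conj (hg : IsCornerPowInv s k p g)
    (hp : Quasinilpotent ((1 - s) * p)) (hn : SemiconjBy n s σ) (hmn : m * n = s ^ k) :
    Quasinilpotent ((1 - σ) * (n * g * m)) := by
  have h : (1 - σ) * (n * g * m) = n * ((1 - s) * g * m) := by
    rw [← mul_assoc, ← mul_assoc, ← ((SemiconjBy.one_right n).sub_right hn).eq]; noncomm_ring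
  rw [h]
  refine Quasinilpotent.mul_comm ?_
  rwa [mul_assoc, hmn, mul_assoc, hg.mul_pow]

theorem isUnit_conj (hg : IsCornerPowInv s k p g) (hp : IsSpectralIdempotent (1 - s) p)
    (hn : SemiconjBy n s σ) (hm : SemiconjBy m σ s) (hmn : m * n = s ^ k)
    (hnm : n * m = σ ^ k) (hQ : ∀ t, Commute t (1 - σ) → Commute t (n * g * m)) :
    IsUnit (1 - σ + n * g * m) := by
  set ρs := ∑ i ∈ range k, s ^ i
  set ρσ := ∑ i ∈ range k, σ ^ i
  set u := 1 - s + p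
  set Λ : R := ↑hp.isUnit.unit⁻¹ * (1 - g * ρs)
  have hus : Commute u s := ((Commute.one_left s).sub_left (.refl s)).add_left
    (hp.commute s ((Commute.one_right s).sub_right (.refl s))).symm
  have huΛ : u * Λ = 1 - g * ρs := by rw [← mul_assoc, hp.isUnit.mul_val_inv, one_mul]
  have hΛ : Commute u Λ := (Commute.refl u).units_inv_right.mul_right
    ((Commute.one_right u).sub_right ((hg.commute u hus).mul_right
      (SemiconjBy.geom_sum hus k)))
  have hXn : (1 - σ + n * g * m) * n = n * u := by
    rw [add_mul, ← ((SemiconjBy.one_right n).sub_right hn).eq, mul_assoc _ m, hmn, mul_assoc,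
      hg.mul_pow, ← mul_add]
  have hmX : m * (1 - σ + n * g * m) = u * m := by
    rw [mul_add, ((SemiconjBy.one_right m).sub_right hm).eq, ← mul_assoc, ← mul_assoc, hmn,
      hg.pow_mul, ← add_mul]
  -- modelled on Jacobson's formula `(1 - n * m)⁻¹ = 1 + n * (1 - m * n)⁻¹ * m`,
  -- with `g` correcting on the range of `p`
  set V := ρσ + n * Λ * m
  have hinv : (1 - σ + n * g * m) * V = 1 := by
    calc (1 - σ + n * g * m) * V
        = (1 - σ) * ρσ + n * g * (m * ρσ) + (1 - σ + n * g * m) * n * Λ * m := by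
          simp only [V]; noncomm_ring
      _ = 1 - n * m + n * (g * ρs + u * Λ) * m := by
          rw [mul_neg_geom_sum, (hm.geom_sum k).eq, hXn, ← hnm]; noncomm_ring
      _ = 1 := by rw [huΛ]; noncomm_ring
  have hcomm : Commute (1 - σ + n * g * m) V := by
    have hρ : Commute ρσ (1 - σ) :=
      ((Commute.one_left _).sub_left (SemiconjBy.geom_sum (Commute.refl σ) k)).symm
    refine (hρ.add_right (hQ ρσ hρ)).symm.add_right ?_
    calc (1 - σ + n * g * m) * (n * Λ * m) = n * (u * Λ) * m := by
          rw [← mul_assoc, ← mul_assoc, hXn]; noncomm_ring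
      _ = n * Λ * m * (1 - σ + n * g * m) := by
          rw [hΛ.eq, mul_assoc (n * Λ) m, hmX]; noncomm_ring
  exact isUnit_iff_exists.mpr ⟨V, hinv, hcomm.eq ▸ hinv⟩

end IsCornerPowInv

theorem IsSpectralIdempotent.conj {s σ n m p : R} {k : ℕ} (hp : IsSpectralIdempotent (1 - s) p)
    (hn : SemiconjBy n s σ) (hm : SemiconjBy m σ s) (hmn : m * n = s ^ k) (hnm : n * m = σ ^ k) :
    ∃ q, IsSpectralIdempotent (1 - σ) q := by
  obtain ⟨g, hg⟩ := hp.exists_isCornerPowInv k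
  have hQ := hg.commute_conj hn hm hnm
  exact ⟨n * g * m, hg.isIdempotentElem_conj hmn, hQ,
    hg.quasinilpotent_conj hp.quasinilpotent hn hmn, hg.isUnit_conj hp hn hm hmn hnm hQ⟩

theorem exists_isGDrazin_one_sub_of_semiconjBy {s σ n m : R} {k : ℕ} (hn : SemiconjBy n s σ)
    (hm : SemiconjBy m σ s) (hmn : m * n = s ^ k) (hnm : n * m = σ ^ k)
    (h : ∃ x, IsGDrazin (1 - s) x) : ∃ z, IsGDrazin (1 - σ) z := by
  obtain ⟨x, hx⟩ := h
  obtain ⟨q, hq⟩ := hx.isSpectralIdempotent.conj hn hm hmn hnm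
  exact ⟨_, hq.isGDrazin⟩

theorem exists_isGDrazin_one_sub_mul_comm {a b : R} (h : ∃ x, IsGDrazin (1 - a * b) x) :
    ∃ z, IsGDrazin (1 - b * a) z :=
  exists_isGDrazin_one_sub_of_semiconjBy (mul_assoc b a b).symm (mul_assoc a b a).symm
    (pow_one _).symm (pow_one _).symm h

structure JacobsonCondition (a b c d : R) : Prop where
  sq_ac : (a * c) ^ 2 = d * b * (a * c)
  sq_db : (d * b) ^ 2 = a * c * (d * b)
  conj_ac : b * (a * c) * a = b * (d * b) * a
  conj_db : c * (a * c) * d = c * (d * b) * d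

namespace JacobsonCondition

variable {a b c d : R}

theorem symm (h : JacobsonCondition a b c d) : JacobsonCondition d c b a :=
  ⟨h.sq_db, h.sq_ac, h.conj_db.symm, h.conj_ac.symm⟩

theorem exists_isGDrazin_of_one_sub_mul (h : JacobsonCondition a b c d)
    (hca : ∃ x, IsGDrazin (1 - c * a) x) : ∃ z, IsGDrazin (1 - b * d) z := by
  have hn : SemiconjBy (b * a) (c * a) (b * d) := by
    calc b * a * (c * a) = b * (a * c) * a := by noncomm_ring
      _ = b * d * (b * a) := by rw [h.conj_ac]; noncomm_ring
  have hm : SemiconjBy (c * d * (b * d)) (b * d) (c * a) := by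
    calc c * d * (b * d) * (b * d) = c * (d * b) * d * (b * d) := by noncomm_ring
      _ = c * a * (c * d * (b * d)) := by rw [← h.conj_db]; noncomm_ring
  have hmn : c * d * (b * d) * (b * a) = (c * a) ^ 3 := by
    calc c * d * (b * d) * (b * a) = c * d * (b * (a * c) * a) := by rw [h.conj_ac]; noncomm_ring
      _ = c * (d * b * (a * c)) * a := by noncomm_ring
      _ = (c * a) ^ 3 := by rw [← h.sq_ac]; noncomm_ring
  have hnm : b * a * (c * d * (b * d)) = (b * d) ^ 3 := by
    calc b * a * (c * d * (b * d)) = b * (a * c * (d * b)) * d := by noncomm_ring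
      _ = (b * d) ^ 3 := by rw [← h.sq_db]; noncomm_ring
  exact exists_isGDrazin_one_sub_of_semiconjBy hn hm hmn hnm hca

theorem exists_isGDrazin_iff (h : JacobsonCondition a b c d) :
    (∃ x, IsGDrazin (1 - b * d) x) ↔ ∃ y, IsGDrazin (1 - a * c) y :=
  ⟨fun hbd => exists_isGDrazin_one_sub_mul_comm (h.symm.exists_isGDrazin_of_one_sub_mul hbd),
    fun hac => h.exists_isGDrazin_of_one_sub_mul (exists_isGDrazin_one_sub_mul_comm hac)⟩


theorem diff_mul_ac (h : JacobsonCondition a b c d) : (a * c - d * b) * (a * c) = 0 := by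
  rw [sub_mul, ← sq, h.sq_ac, sub_self]

theorem diff_mul_db (h : JacobsonCondition a b c d) : (a * c - d * b) * (d * b) = 0 := by
  rw [sub_mul, ← sq, h.sq_db, sub_self]

theorem diff_mul_one_sub_ac (h : JacobsonCondition a b c d) :
    (a * c - d * b) * (1 - a * c) = a * c - d * b := by
  rw [mul_one_sub, h.diff_mul_ac, sub_zero]

theorem diff_mul_one_sub_db (h : JacobsonCondition a b c d) :
    (a * c - d * b) * (1 - d * b) = a * c - d * b := by
  rw [mul_one_sub, h.diff_mul_db, sub_zero]

theorem diff_mul_self (h : JacobsonCondition a b c d) :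
    (a * c - d * b) * (a * c - d * b) = 0 := by
  rw [mul_sub, h.diff_mul_ac, h.diff_mul_db, sub_zero]

theorem mul_diff_mul_a (h : JacobsonCondition a b c d) : b * (a * c - d * b) * a = 0 := by
  rw [mul_sub, sub_mul, h.conj_ac, sub_self]

theorem mul_diff_mul_d (h : JacobsonCondition a b c d) : c * (a * c - d * b) * d = 0 := by
  rw [mul_sub, sub_mul, h.conj_db, sub_self]

theorem geom_sum_mul_sub (h : JacobsonCondition a b c d) (n : ℕ) :
    (∑ i ∈ range n, (1 - a * c) ^ i) * a * c - (∑ i ∈ range n, (1 - d * b) ^ i) * d * b =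
      (∑ i ∈ range n, (1 - a * c) ^ i) * (a * c - d * b) := by
  have hw : (1 - d * b) - (1 - a * c) = a * c - d * b := sub_sub_sub_cancel_left _ _ _
  rw [mul_assoc, mul_assoc, geom_sum_one_sub_mul, geom_sum_one_sub_mul, sub_sub_sub_cancel_left,
    pow_sub_pow_eq_geom_sum_mul (hw ▸ h.diff_mul_one_sub_db), hw]

theorem geom_sum_mul_diff_comm (h : JacobsonCondition a b c d) (n : ℕ) :
    (∑ i ∈ range n, (1 - a * c) ^ i) * (a * c - d * b) =
      (∑ i ∈ range n, (1 - d * b) ^ i) * (a * c - d * b) := by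
  have hw : (1 - d * b) - (1 - a * c) = a * c - d * b := sub_sub_sub_cancel_left _ _ _
  have h' := geom_sum_mul_sub_comm (hw ▸ h.diff_mul_one_sub_db) (hw ▸ h.diff_mul_self) n
  rwa [hw] at h'

theorem geomSum (h : JacobsonCondition a b c d) (n : ℕ) :
    JacobsonCondition ((∑ i ∈ range n, (1 - a * c) ^ i) * a) b c
      ((∑ i ∈ range n, (1 - d * b) ^ i) * d) := by
  set S := ∑ i ∈ range n, (1 - a * c) ^ i
  set T := ∑ i ∈ range n, (1 - d * b) ^ i
  set w := a * c - d * b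
  have hSw : S * a * c - T * d * b = S * w := h.geom_sum_mul_sub n
  have hST : S * w = T * w := h.geom_sum_mul_diff_comm n
  have hwX : w * (1 - a * c) = w := h.diff_mul_one_sub_ac
  have hwY : w * (1 - d * b) = w := h.diff_mul_one_sub_db
  have hac : S * a * c = 1 - (1 - a * c) ^ n := by rw [mul_assoc, geom_sum_one_sub_mul]
  have hdb : T * d * b = 1 - (1 - d * b) ^ n := by rw [mul_assoc, geom_sum_one_sub_mul]
  refine ⟨sub_eq_zero.mp ?_, sub_eq_zero.mp ?_, sub_eq_zero.mp ?_, sub_eq_zero.mp ?_⟩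
  · calc (S * a * c) ^ 2 - T * d * b * (S * a * c) = (S * a * c - T * d * b) * (S * a * c) := by
          noncomm_ring
      _ = S * (w - w * (1 - a * c) ^ n) := by rw [hSw, hac, mul_assoc, mul_one_sub]
      _ = 0 := by rw [mul_pow_eq_self_of_mul_eq_self hwX, sub_self, mul_zero]
  · calc (T * d * b) ^ 2 - S * a * c * (T * d * b)
        = -((S * a * c - T * d * b) * (T * d * b)) := by noncomm_ring
      _ = -(S * (w - w * (1 - d * b) ^ n)) := by rw [hSw, hdb, mul_assoc, mul_one_sub]
      _ = 0 := by rw [mul_pow_eq_self_of_mul_eq_self hwY, sub_self, mul_zero, neg_zero]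
  · calc b * (S * a * c) * (S * a) - b * (T * d * b) * (S * a)
        = b * (S * a * c - T * d * b) * S * a := by noncomm_ring
      _ = b * T * (w * S) * a := by rw [hSw, hST]; noncomm_ring
      _ = n • ((∑ i ∈ range n, (1 - b * d) ^ i) * (b * w * a)) := by
          rw [mul_geom_sum_eq_nsmul hwX, ((semiconjBy_one_sub_mul b d).geom_sum n).eq]
          simp only [mul_smul_comm, smul_mul_assoc, mul_assoc]
      _ = 0 := by rw [h.mul_diff_mul_a, mul_zero, smul_zero]
  · calc c * (S * a * c) * (T * d) - c * (T * d * b) * (T * d)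
        = c * (S * a * c - T * d * b) * T * d := by noncomm_ring
      _ = c * S * (w * T) * d := by rw [hSw]; noncomm_ring
      _ = n • ((∑ i ∈ range n, (1 - c * a) ^ i) * (c * w * d)) := by
          rw [mul_geom_sum_eq_nsmul hwY, ((semiconjBy_one_sub_mul c a).geom_sum n).eq]
          simp only [mul_smul_comm, smul_mul_assoc, mul_assoc]
      _ = 0 := by rw [h.mul_diff_mul_d, mul_zero, smul_zero]

end JacobsonCondition

end

theorem gdrazin_pow_iff_general {R : Type*} [Ring R] (n : ℕ) (a b c d : R)
    (h1 : (a * c) ^ 2 = (d * b) * (a * c)) (h2 : (d * b) ^ 2 = (a * c) * (d * b))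
    (h3 : b * (a * c) * a = b * (d * b) * a) (h4 : c * (a * c) * d = c * (d * b) * d) :
    (∃ x : R, IsGDrazin ((1 - b * d) ^ n) x) ↔ (∃ y : R, IsGDrazin ((1 - a * c) ^ n) y) := by
  have hbd : 1 - b * ((∑ i ∈ range n, (1 - d * b) ^ i) * d) = (1 - b * d) ^ n := by
    rw [← mul_assoc, ((semiconjBy_one_sub_mul b d).geom_sum n).eq, mul_assoc,
      geom_sum_one_sub_mul, sub_sub_cancel]
  have hac : 1 - (∑ i ∈ range n, (1 - a * c) ^ i) * a * c = (1 - a * c) ^ n := by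
    rw [mul_assoc, geom_sum_one_sub_mul, sub_sub_cancel]
  rw [← hbd, ← hac]
  exact ((JacobsonCondition.mk h1 h2 h3 h4).geomSum n).exists_isGDrazin_iff

theorem gdrazin_pow_iff {R : Type*} [Ring R] (n : ℕ) (hn : 1 ≤ n) (a b c d : R)
    (h1 : (a * c) ^ 2 = (d * b) * (a * c)) (h2 : (d * b) ^ 2 = (a * c) * (d * b))
    (h3 : b * (a * c) * a = b * (d * b) * a) (h4 : c * (a * c) * d = c * (d * b) * d) :
    (∃ x : R, IsGDrazin ((1 - b * d) ^ n) x) ↔ (∃ y : R, IsGDrazin ((1 - a * c) ^ n) y) :=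
  gdrazin_pow_iff_general n a b c d h1 h2 h3 h4
end

section
/- Let R be a ring and a,b,c,d ∈ R satisfy acd = dbd and dba = aca. Then 1 - bd is Drazin invertible if and only if 1 - ac is Drazin invertible, and i(1-ac) ≤ i(1-bd) + 1. -/
/-- `x` is a Drazin inverse of `a` with (an) index `k`. -/
def IsDrazinWithIndex {R : Type*} [Ring R] (a x : R) (k : ℕ) : Prop :=
  x = x * a * x ∧ x * a = a * x ∧ a ^ k = a ^ (k + 1) * x

/-- The Drazin index: the least `k` admitting a Drazin inverse with index `k`. -/
noncomputable def drazinIndex {R : Type*} [Ring R] (a : R) : ℕ :=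
  sInf {k : ℕ | ∃ x : R, IsDrazinWithIndex a x k}


/-! Write `p = a c` and `q = b d`. The hypotheses say `p d = d q` and `p p = d (b p)`, so `p`
behaves like `d q⁻¹ (b p)` and Jacobson's formula `(1 - m n)⁻¹ = 1 + m (1 - n m)⁻¹ n` suggests the
Drazin inverse `y = 1 + p + d u (b p)` of `1 - p`, where `u` is built from a Drazin inverse of
`1 - q` in the commutative ring it generates with `q`. Then `1 - (1 - p) y = d z (b p)` with `z`
in that commutative ring, and the intertwining `(1 - p)ⁿ d = d (1 - q)ⁿ` carries the identities
satisfied by `z` over to `1 - p`, at the cost of one in the index. The converse runs the same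
transfer through `1 - a c → 1 - c a → 1 - d b → 1 - b d`. -/

section DrazinCriterion

variable {R : Type*} [Ring R]

theorem isDrazinWithIndex_of_map {S F : Type*} [Ring S] [FunLike F R S] [MonoidHomClass F R S]
    {f : F} (hf : Function.Injective f) {a x : R} {k : ℕ}
    (h : IsDrazinWithIndex (f a) (f x) k) : IsDrazinWithIndex a x k := by
  obtain ⟨h₁, h₂, h₃⟩ := h
  refine ⟨hf ?_, hf ?_, hf ?_⟩ <;> simpa only [map_mul, map_pow]

theorem isDrazinWithIndex_of_mul_eq_one_sub {a y e : R} {k : ℕ}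
    (hay : a * y = 1 - e) (hya : y * a = 1 - e) (hey : e * y = 0) (hk : a ^ k * e = 0) :
    IsDrazinWithIndex a y k := by
  refine ⟨?_, by rw [hay, hya], ?_⟩
  · rw [hya, sub_mul, one_mul, hey, sub_zero]
  · rw [pow_succ, mul_assoc, hay, mul_sub, mul_one, hk, sub_zero]

end DrazinCriterion

theorem exists_mul_eq_zero_of_isDrazinWithIndex_one_sub {A : Type*} [CommRing A] {q x : A}
    {k : ℕ} (h : IsDrazinWithIndex (1 - q) x k) :
    ∃ u : A, (1 - (1 - q) * u) * (1 + q + q ^ 2 * u) = 0 ∧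
      (1 - q) ^ (k + 1) * (1 - (1 - q) * u) = 0 := by
  obtain ⟨β, rfl⟩ : ∃ β, q = 1 - β := ⟨1 - q, (sub_sub_cancel 1 q).symm⟩
  rw [sub_sub_cancel] at h ⊢
  obtain ⟨hxx, -, hk⟩ := h
  obtain ⟨S, hS⟩ : ∃ S, S * (1 - β) = 1 - β ^ (k + 1) :=
    ⟨∑ i ∈ Finset.range (k + 1), β ^ i, by linear_combination -geom_sum_mul β (k + 1)⟩
  -- `u` is the inverse `x` of `β` where `β` is invertible; where `β` is nilpotent, `1 - β` has
  -- the inverse `W` and `u = -(W + W ^ 2)` makes `1 + (1 - β) + (1 - β) ^ 2 * u` vanish.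
  set P := 1 - β * x with hP
  have hxP : x * P = 0 := by linear_combination hxx
  have hPP : P * P = P := by linear_combination (-β) * hxP
  have hkP : β ^ k * P = 0 := by linear_combination hk
  set W := S * P
  have hWP : W * P = W := by linear_combination S * hPP
  have hWq : W * (1 - β) = P := by linear_combination P * hS - β * hkP
  have hkW : β ^ k * W = 0 := by linear_combination S * hkP
  clear_value P W
  set u := x - W - W ^ 2
  have hz : 1 - β * u = W ^ 2 := by linear_combination -hP - hWP - (1 + W) * hWq
  have hW2q : W ^ 2 * (1 - β) = W := by linear_combination W * hWq + hWP
  have hW2q2 : W ^ 2 * (1 - β) ^ 2 = P := by linear_combination (1 - β) * hW2q + hWq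
  have hPu : P * u = -(W + W ^ 2) := by linear_combination hxP - (1 + W) * hWP
  refine ⟨u, ?_, ?_⟩
  · rw [hz]
    linear_combination hW2q + u * hW2q2 + hPu
  · rw [hz]
    linear_combination β * W * hkW

open scoped IsMulCommutative in
theorem exists_commute_mul_eq_zero_of_isDrazinWithIndex_one_sub {R : Type*} [Ring R] {q x : R}
    {k : ℕ} (h : IsDrazinWithIndex (1 - q) x k) :
    ∃ u : R, Commute q u ∧ (1 - (1 - q) * u) * (1 + q + q ^ 2 * u) = 0 ∧
      (1 - q) ^ (k + 1) * (1 - (1 - q) * u) = 0 := by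
  have hqx : Commute q x := by
    simpa using (Commute.one_left x).sub_left h.2.1.symm
  let C := Subring.closure ({q, x} : Set R)
  have : IsMulCommutative C := Subring.isMulCommutative_closure (by
    simp only [Set.mem_insert_iff, Set.mem_singleton_iff]
    rintro a (rfl | rfl) b (rfl | rfl)
    exacts [rfl, hqx.eq, hqx.eq.symm, rfl])
  have hq : q ∈ C := Subring.subset_closure (by simp)
  have hx : x ∈ C := Subring.subset_closure (by simp)
  have hC : IsDrazinWithIndex (1 - ⟨q, hq⟩ : C) ⟨x, hx⟩ k :=
    isDrazinWithIndex_of_map (f := C.subtype) Subtype.val_injective h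
  obtain ⟨u, hu₁, hu₂⟩ := exists_mul_eq_zero_of_isDrazinWithIndex_one_sub (A := C) hC
  refine ⟨u, congrArg Subtype.val (mul_comm (⟨q, hq⟩ : C) u), ?_, ?_⟩
  · simpa using congrArg C.subtype hu₁
  · simpa using congrArg C.subtype hu₂

theorem exists_isDrazinWithIndex_one_sub_of_mul_eq {R : Type*} [Ring R] {p b d x : R} {k : ℕ}
    (hpp : p * p = d * b * p) (hpd : p * d = d * b * d)
    (hx : IsDrazinWithIndex (1 - b * d) x k) :
    ∃ y : R, IsDrazinWithIndex (1 - p) y (k + 1) := by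
  obtain ⟨u, hqu, hz, hkz⟩ := exists_commute_mul_eq_zero_of_isDrazinWithIndex_one_sub hx
  set q := b * d
  set e := b * p
  have hpp' : p * p = d * e := by rw [hpp, mul_assoc]
  have hpd' : p * d = d * q := by rw [hpd, mul_assoc]
  have hep : e * p = q * e := by simp only [e, q, mul_assoc, hpp']
  have hed : e * d = q * q := by simp only [e, q, mul_assoc, hpd']
  have hpow : (1 - p) ^ (k + 1) * d = d * (1 - q) ^ (k + 1) :=
    (SemiconjBy.pow_right (by rw [SemiconjBy, mul_sub, sub_mul, hpd', mul_one, one_mul]) _).eq.symm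
  clear_value q e
  refine ⟨1 + p + d * u * e,
    isDrazinWithIndex_of_mul_eq_one_sub (e := d * (1 - (1 - q) * u) * e) ?_ ?_ ?_ ?_⟩
  · calc (1 - p) * (1 + p + d * u * e) = 1 - p * p + d * u * e - p * d * u * e := by noncomm_ring
      _ = 1 - d * (1 - (1 - q) * u) * e := by rw [hpp', hpd']; noncomm_ring
  · calc (1 + p + d * u * e) * (1 - p) = 1 - p * p + d * u * e - d * u * (e * p) := by noncomm_ring
      _ = 1 - d * e + d * u * e - d * (u * q) * e := by rw [hpp', hep]; noncomm_ring
      _ = 1 - d * (1 - (1 - q) * u) * e := by rw [← hqu.eq]; noncomm_ring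
  · calc d * (1 - (1 - q) * u) * e * (1 + p + d * u * e)
        = d * (1 - (1 - q) * u) * (e + e * p + e * d * u * e) := by noncomm_ring
      _ = d * ((1 - (1 - q) * u) * (1 + q + q ^ 2 * u)) * e := by rw [hep, hed]; noncomm_ring
      _ = 0 := by rw [hz, mul_zero, zero_mul]
  · rw [← mul_assoc, ← mul_assoc, hpow, mul_assoc d, hkz, mul_zero, zero_mul]

theorem exists_isDrazinWithIndex_one_sub_mul_comm {R : Type*} [Ring R] {a b x : R} {k : ℕ}
    (hx : IsDrazinWithIndex (1 - b * a) x k) :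
    ∃ y : R, IsDrazinWithIndex (1 - a * b) y (k + 1) :=
  exists_isDrazinWithIndex_one_sub_of_mul_eq rfl rfl hx

theorem drazin_special {R : Type*} [Ring R] (a b c d : R)
    (h1 : a * c * d = d * b * d) (h2 : d * b * a = a * c * a) :
    ((∃ x : R, ∃ k : ℕ, IsDrazinWithIndex (1 - b * d) x k) ↔
      (∃ y : R, ∃ k : ℕ, IsDrazinWithIndex (1 - a * c) y k)) ∧
    ((∃ x : R, ∃ k : ℕ, IsDrazinWithIndex (1 - b * d) x k) →
      drazinIndex (1 - a * c) ≤ drazinIndex (1 - b * d) + 1) := by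
  have transfer : ∀ {x : R} {k : ℕ}, IsDrazinWithIndex (1 - b * d) x k →
      ∃ y : R, IsDrazinWithIndex (1 - a * c) y (k + 1) :=
    exists_isDrazinWithIndex_one_sub_of_mul_eq
      (by rw [← mul_assoc, ← h2, mul_assoc]) h1
  refine ⟨⟨fun ⟨x, k, hx⟩ ↦ (transfer hx).imp fun _ hy ↦ ⟨_, hy⟩, fun ⟨y, k, hy⟩ ↦ ?_⟩, ?_⟩
  · obtain ⟨y₁, hy₁⟩ := exists_isDrazinWithIndex_one_sub_mul_comm hy
    obtain ⟨y₂, hy₂⟩ := exists_isDrazinWithIndex_one_sub_of_mul_eq (p := d * b)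
      (by rw [← mul_assoc, ← h1, mul_assoc]) h2 hy₁
    obtain ⟨y₃, hy₃⟩ := exists_isDrazinWithIndex_one_sub_mul_comm hy₂
    exact ⟨y₃, _, hy₃⟩
  · rintro ⟨x, k, hx⟩
    obtain ⟨x₀, hx₀⟩ :=
      Nat.sInf_mem (s := {m | ∃ z, IsDrazinWithIndex (1 - b * d) z m}) ⟨k, x, hx⟩
    exact Nat.sInf_le (transfer hx₀)
end
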